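/- For any f : Z_3^K → U₃ and g : Z_3^L → U₃: −Re E[f(x)g(y)g(z)] ≤ |f̂(0)|·((3/4)|ĝ(0)|² + (1/4)·Even(g)) + Dec(f,g). In particular the key combinatorial step: Σ_{α : π₃(α)=0} |ĝ(α)|²·(1/2)^{#α} ≤ (3/4)|ĝ(0)|² + (1/4)Even(g), using that no α with exactly one nonzero coordinate satisfies π₃(α) = 0. -/

import Mathlib

open Finset

noncomputable def ω : ℂ := Complex.exp (2 * Real.pi * Complex.I / 3)

/-- Fourier coefficient of `f : Z_3^ι → ℂ` at `α`: `E_x[f(x) · conj(ω^{α·x})]`. -/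
noncomputable def fhat {ι : Type*} [Fintype ι] [DecidableEq ι] (f : (ι → ZMod 3) → ℂ)
    (α : ι → ZMod 3) : ℂ :=
  (∑ x : ι → ZMod 3, f x * (starRingEnd ℂ) (ω ^ (∑ i, α i * x i).val)) /
    (Fintype.card (ι → ZMod 3) : ℂ)

/-- The projection `π₃(α) ∈ Z_3^K`, whose `i`-th coordinate is the sum of block `i` of `α`. -/
def pi3 {K d : ℕ} (α : Fin K × Fin d → ZMod 3) : Fin K → ZMod 3 :=
  fun i => ∑ j, α (i, j)

/-- `#α`: number of nonzero coordinates of `α`. -/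
def nsupp {ι : Type*} [Fintype ι] (α : ι → ZMod 3) : ℕ :=
  (univ.filter (fun i => α i ≠ 0)).card

/-- The test distribution's joint pmf: `x` uniform on `Z_3^K`, and independently per coordinate
`(i,j)`, `(y_{ij}, z_{ij})` uniform over the six pairs with `y_{ij} + z_{ij} ≠ 2·x_i`,
i.e. the pairs `(a,a+1),(a,a+2),(a+1,a),(a+1,a+1),(a+2,a),(a+2,a+2)` for `a = x_i`. -/
noncomputable def wt {K d : ℕ} (x : Fin K → ZMod 3) (y z : Fin K × Fin d → ZMod 3) : ℝ :=
  (1 / 3 ^ K) * ∏ p : Fin K × Fin d, (if y p + z p = 2 * x p.1 then (0 : ℝ) else 1/6)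

/-- `Even(g) = Σ_{|α| ≡ 0} |ĝ(α)|²`. -/
noncomputable def evenPart {ι : Type*} [Fintype ι] [DecidableEq ι]
    (g : (ι → ZMod 3) → ℂ) : ℝ :=
  ∑ α ∈ univ.filter (fun α : ι → ZMod 3 => (∑ i, α i) = 0), ‖fhat g α‖^2

/-!
Since `y + z = 2x` iff `x + y + z = 0` in `ZMod 3`, the test weight is `3⁻ᴷ ∏ₚ (1/6)[tₚ ≠ 0]`
with `tₚ = x p.1 + yₚ + zₚ`. The one-coordinate identity `∑ₐ h(a) ψ(-a t) = (3/2)[t ≠ 0]`, where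
`h(0) = 1` and `h(a) = -1/2` otherwise, expands this weight in characters with coefficients
`(-1/2)^#α`, which turns the expectation into `∑_α (-1/2)^#α f̂(π₃ α) ĝ(α)²`; the triangle
inequality then bounds `-Re` termwise. On `π₃ α = 0`, the term `α = 0` contributes `|ĝ(0)|²`, and
every other `α` has total sum `0` and at least two nonzero coordinates (a single one would be the
sum of its block), so it carries weight at most `1/4`.
-/

lemma AddChar.map_sum_eq_prod {A M ι : Type*} [AddCommMonoid A] [CommMonoid M]
    (φ : AddChar A M) (s : Finset ι) (a : ι → A) : φ (∑ i ∈ s, a i) = ∏ i ∈ s, φ (a i) :=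
  map_prod φ.toMonoidHom (fun i => Multiplicative.ofAdd (a i)) s

local notation "ψ" => (ZMod.stdAddChar : AddChar (ZMod 3) ℂ)

lemma omega_pow_val (a : ZMod 3) : ω ^ a.val = ψ a := by
  rw [ZMod.stdAddChar_apply, ZMod.toCircle_apply, ω, ← Complex.exp_nat_mul]
  congr 1
  push_cast
  ring

lemma fhat_eq_sum_char {ι : Type*} [Fintype ι] [DecidableEq ι] (f : (ι → ZMod 3) → ℂ)
    (α : ι → ZMod 3) :
    fhat f α = (∑ x, f x * ψ (-∑ i, α i * x i)) / 3 ^ Fintype.card ι := by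
  simp only [fhat, omega_pow_val, ← AddChar.map_neg_eq_conj, Fintype.card_fun, ZMod.card]
  push_cast
  rfl

lemma nsupp_zero {ι : Type*} [Fintype ι] : nsupp (0 : ι → ZMod 3) = 0 := by
  simp [nsupp]

lemma nsupp_pos {ι : Type*} [Fintype ι] {α : ι → ZMod 3} (hα : α ≠ 0) : 0 < nsupp α := by
  obtain ⟨p, hp⟩ := Function.ne_iff.1 hα
  exact Finset.card_pos.2 ⟨p, Finset.mem_filter.2 ⟨Finset.mem_univ p, hp⟩⟩

lemma neg_half_pow_nsupp {ι : Type*} [Fintype ι] (α : ι → ZMod 3) :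
    (-1/2 : ℂ) ^ nsupp α = ∏ p, if α p = 0 then 1 else -1/2 := by
  rw [Finset.prod_ite, Finset.prod_const_one, one_mul, Finset.prod_const, nsupp]

lemma sum_ite_neg_half_mul_char (t : ZMod 3) :
    ∑ a : ZMod 3, (if a = 0 then (1 : ℂ) else -1/2) * ψ (-(a * t)) =
      if t = 0 then 0 else 3/2 := by
  have hweight : ∀ a : ZMod 3,
      (if a = 0 then (1 : ℂ) else -1/2) = 3/2 * (if a = 0 then 1 else 0) - 1/2 := by
    intro a
    split_ifs <;> norm_num
  calc _ = 3/2 - 1/2 * ∑ a : ZMod 3, ψ (a * -t) := by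
        simp only [hweight, sub_mul, Finset.sum_sub_distrib, mul_assoc, ← Finset.mul_sum, ite_mul,
          one_mul, zero_mul, Finset.sum_ite_eq', Finset.mem_univ, if_true, neg_zero,
          AddChar.map_zero_eq_one, mul_one, mul_neg]
    _ = _ := by
        rw [AddChar.sum_mulShift _ (ZMod.isPrimitive_stdAddChar 3)]
        simp only [neg_eq_zero, ZMod.card]
        split_ifs <;> norm_num

lemma sum_neg_half_pow_nsupp_mul_char {ι : Type*} [Fintype ι] [DecidableEq ι]
    (t : ι → ZMod 3) :
    ∑ α : ι → ZMod 3, (-1/2 : ℂ) ^ nsupp α * ψ (-∑ p, α p * t p) =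
      ∏ p, if t p = 0 then 0 else 3/2 := by
  simp only [neg_half_pow_nsupp, ← Finset.sum_neg_distrib, AddChar.map_sum_eq_prod,
    ← Finset.prod_mul_distrib]
  rw [← Fintype.prod_sum (fun p a => (if a = 0 then (1 : ℂ) else -1/2) * ψ (-(a * t p)))]
  simp only [sum_ite_neg_half_mul_char]

lemma add_eq_two_mul_iff (a b c : ZMod 3) : b + c = 2 * a ↔ a + b + c = 0 := by
  revert a b c
  decide

section Blocks

variable {K d : ℕ}

lemma wt_eq_sum_char (x : Fin K → ZMod 3) (y z : Fin K × Fin d → ZMod 3) :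
    (wt x y z : ℂ) = (∑ α : Fin K × Fin d → ZMod 3,
      (-1/2 : ℂ) ^ nsupp α * ψ (-∑ p, α p * (x p.1 + y p + z p))) / (3 ^ K * 9 ^ (K * d)) := by
  have hfactor : ∀ p : Fin K × Fin d,
      (if y p + z p = 2 * x p.1 then (0 : ℂ) else 1/6) =
        (if x p.1 + y p + z p = 0 then 0 else 3/2) / 9 := by
    intro p
    simp only [add_eq_two_mul_iff]
    split_ifs <;> norm_num
  rw [sum_neg_half_pow_nsupp_mul_char, wt]
  push_cast [apply_ite (Complex.ofReal)]
  rw [Finset.prod_congr rfl fun p _ => hfactor p, Finset.prod_div_distrib, Finset.prod_const,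
    Finset.card_univ, Fintype.card_prod, Fintype.card_fin, Fintype.card_fin]
  field_simp

lemma sum_pi3_mul (α : Fin K × Fin d → ZMod 3) (x : Fin K → ZMod 3) :
    ∑ i, pi3 α i * x i = ∑ p, α p * x p.1 := by
  simp only [pi3, Finset.sum_mul, Fintype.sum_prod_type]

lemma neg_half_pow_mul_fhat (f : (Fin K → ZMod 3) → ℂ) (g : (Fin K × Fin d → ZMod 3) → ℂ)
    (α : Fin K × Fin d → ZMod 3) :
    (-1/2 : ℂ) ^ nsupp α * fhat f (pi3 α) * fhat g α ^ 2 =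
      ∑ x, ∑ y, ∑ z, f x * g y * g z * ((-1/2 : ℂ) ^ nsupp α *
        ψ (-∑ p, α p * (x p.1 + y p + z p))) / (3 ^ K * 9 ^ (K * d)) := by
  have hterm : ∀ (x : Fin K → ZMod 3) (y z : Fin K × Fin d → ZMod 3),
      f x * g y * g z * ((-1/2 : ℂ) ^ nsupp α * ψ (-∑ p, α p * (x p.1 + y p + z p))) /
          (3 ^ K * 9 ^ (K * d)) =
        (-1/2 : ℂ) ^ nsupp α / (3 ^ K * 9 ^ (K * d)) * (f x * ψ (-∑ p, α p * x p.1) *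
          (g y * ψ (-∑ p, α p * y p)) * (g z * ψ (-∑ p, α p * z p))) := by
    intro x y z
    simp only [mul_add, Finset.sum_add_distrib, neg_add, AddChar.map_add_eq_mul]
    ring
  have hnine : (9 : ℂ) ^ (K * d) = 3 ^ (K * d) * 3 ^ (K * d) := by
    rw [← mul_pow]
    norm_num
  simp only [hterm, ← Finset.mul_sum, ← Finset.sum_mul]
  simp only [fhat_eq_sum_char, sum_pi3_mul, Fintype.card_fin, Fintype.card_prod, hnine]
  ring

lemma sum_wt_mul_eq_sum_fhat (f : (Fin K → ZMod 3) → ℂ) (g : (Fin K × Fin d → ZMod 3) → ℂ) :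
    ∑ x, ∑ y, ∑ z, (wt x y z : ℂ) * f x * g y * g z =
      ∑ α, (-1/2 : ℂ) ^ nsupp α * fhat f (pi3 α) * fhat g α ^ 2 := by
  simp only [neg_half_pow_mul_fhat, wt_eq_sum_char, Finset.sum_div, Finset.sum_mul]
  symm
  rw [Finset.sum_comm]
  refine Finset.sum_congr rfl fun x _ => ?_
  rw [Finset.sum_comm]
  refine Finset.sum_congr rfl fun y _ => ?_
  rw [Finset.sum_comm]
  refine Finset.sum_congr rfl fun z _ => Finset.sum_congr rfl fun α _ => ?_
  ring

lemma neg_re_sum_wt_mul_le (f : (Fin K → ZMod 3) → ℂ) (g : (Fin K × Fin d → ZMod 3) → ℂ) :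
    -(∑ x, ∑ y, ∑ z, (wt x y z : ℂ) * f x * g y * g z).re ≤
      ∑ α, ‖fhat f (pi3 α)‖ * ‖fhat g α‖ ^ 2 * (1/2 : ℝ) ^ nsupp α := by
  rw [sum_wt_mul_eq_sum_fhat, Complex.re_sum, ← Finset.sum_neg_distrib]
  refine Finset.sum_le_sum fun α _ => ?_
  calc -((-1/2 : ℂ) ^ nsupp α * fhat f (pi3 α) * fhat g α ^ 2).re
      ≤ ‖(-1/2 : ℂ) ^ nsupp α * fhat f (pi3 α) * fhat g α ^ 2‖ := by
        rw [← Complex.neg_re, ← norm_neg]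
        exact Complex.re_le_norm _
    _ = ‖fhat f (pi3 α)‖ * ‖fhat g α‖ ^ 2 * (1/2 : ℝ) ^ nsupp α := by
        rw [norm_mul, norm_mul, norm_pow, norm_pow, norm_div, norm_neg, norm_one,
          Complex.norm_ofNat]
        ring

lemma sum_eq_zero_of_pi3_eq_zero {α : Fin K × Fin d → ZMod 3} (h : pi3 α = 0) :
    ∑ p, α p = 0 := by
  rw [Fintype.sum_prod_type]
  exact Finset.sum_eq_zero fun i _ => congrFun h i

lemma nsupp_ne_one_of_pi3_eq_zero {α : Fin K × Fin d → ZMod 3} (h : pi3 α = 0) :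
    nsupp α ≠ 1 := by
  intro hone
  obtain ⟨p, hp⟩ := Finset.card_eq_one.1 hone
  have hsupp : ∀ q, α q ≠ 0 ↔ q = p := fun q => by
    simpa using Finset.ext_iff.1 hp q
  have hblock : pi3 α p.1 = α p :=
    Finset.sum_eq_single p.2
      (fun j _ hj => not_not.1 fun hq => hj (congrArg Prod.snd ((hsupp _).1 hq))) (by simp)
  exact (hsupp p).2 rfl (hblock ▸ congrFun h p.1)

lemma two_le_nsupp_of_pi3_eq_zero {α : Fin K × Fin d → ZMod 3} (h : pi3 α = 0)
    (hα : α ≠ 0) : 2 ≤ nsupp α := by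
  have := nsupp_pos hα
  have := nsupp_ne_one_of_pi3_eq_zero h
  omega

lemma sum_pi3_eq_zero_mul_half_pow_nsupp_le (c : (Fin K × Fin d → ZMod 3) → ℝ)
    (hc : ∀ α, 0 ≤ c α) :
    ∑ α ∈ univ.filter (fun α : Fin K × Fin d → ZMod 3 => pi3 α = 0), c α * (1/2 : ℝ) ^ nsupp α
      ≤ (3/4) * c 0 +
        (1/4) * ∑ α ∈ univ.filter (fun α : Fin K × Fin d → ZMod 3 => ∑ p, α p = 0), c α := by
  set A := univ.filter (fun α : Fin K × Fin d → ZMod 3 => pi3 α = 0)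
  set E := univ.filter (fun α : Fin K × Fin d → ZMod 3 => ∑ p, α p = 0)
  have h0A : 0 ∈ A := Finset.mem_filter.2 ⟨Finset.mem_univ _, funext fun i => by simp [pi3]⟩
  have h0E : 0 ∈ E := Finset.mem_filter.2 ⟨Finset.mem_univ _, by simp⟩
  have hAE : A.erase 0 ⊆ E.erase 0 := fun α hα => by
    simp only [A, E, Finset.mem_erase, Finset.mem_filter] at hα ⊢
    exact ⟨hα.1, Finset.mem_univ α, sum_eq_zero_of_pi3_eq_zero hα.2.2⟩
  have hrest : ∑ α ∈ A.erase 0, c α * (1/2 : ℝ) ^ nsupp α ≤ (1/4) * ∑ α ∈ E.erase 0, c α :=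
    calc ∑ α ∈ A.erase 0, c α * (1/2 : ℝ) ^ nsupp α
        ≤ ∑ α ∈ A.erase 0, c α * (1/2) ^ 2 := by
          refine Finset.sum_le_sum fun α hα => mul_le_mul_of_nonneg_left ?_ (hc α)
          obtain ⟨hα0, hαA⟩ := Finset.mem_erase.1 hα
          exact pow_le_pow_of_le_one (by norm_num) (by norm_num)
            (two_le_nsupp_of_pi3_eq_zero (Finset.mem_filter.1 hαA).2 hα0)
      _ ≤ ∑ α ∈ E.erase 0, c α * (1/2) ^ 2 :=
          Finset.sum_le_sum_of_subset_of_nonneg hAE fun α _ _ => by positivity [hc α]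
      _ = (1/4) * ∑ α ∈ E.erase 0, c α := by rw [← Finset.sum_mul]; ring
  rw [← Finset.add_sum_erase A _ h0A, ← Finset.add_sum_erase E _ h0E, nsupp_zero, pow_zero,
    mul_one]
  linarith [hc 0]

end Blocks

theorem stmt15_general (K d : ℕ)
    (f : (Fin K → ZMod 3) → ℂ) (g : (Fin K × Fin d → ZMod 3) → ℂ) :
    (∑ α ∈ univ.filter (fun α : Fin K × Fin d → ZMod 3 => pi3 α = 0),
        ‖fhat g α‖^2 * (1/2 : ℝ) ^ nsupp α
      ≤ (3/4) * ‖fhat g 0‖^2 + (1/4) * evenPart g) ∧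
    -(∑ x : Fin K → ZMod 3, ∑ y : Fin K × Fin d → ZMod 3, ∑ z : Fin K × Fin d → ZMod 3,
        (wt x y z : ℂ) * f x * g y * g z).re
      ≤ ‖fhat f 0‖ * ((3/4) * ‖fhat g 0‖^2 + (1/4) * evenPart g)
        + ∑ α ∈ univ.filter (fun α : Fin K × Fin d → ZMod 3 => pi3 α ≠ 0),
            ‖fhat f (pi3 α)‖ * ‖fhat g α‖^2 * (1/2 : ℝ) ^ nsupp α := by
  have hcentral := sum_pi3_eq_zero_mul_half_pow_nsupp_le (fun α => ‖fhat g α‖ ^ 2)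
    (fun α => sq_nonneg _)
  refine ⟨hcentral, (neg_re_sum_wt_mul_le f g).trans ?_⟩
  rw [← Finset.sum_filter_add_sum_filter_not univ (fun α => pi3 α = 0)]
  gcongr
  calc ∑ α ∈ univ.filter (fun α : Fin K × Fin d → ZMod 3 => pi3 α = 0),
        ‖fhat f (pi3 α)‖ * ‖fhat g α‖ ^ 2 * (1/2 : ℝ) ^ nsupp α
      = ‖fhat f 0‖ * ∑ α ∈ univ.filter (fun α : Fin K × Fin d → ZMod 3 => pi3 α = 0),
          ‖fhat g α‖ ^ 2 * (1/2 : ℝ) ^ nsupp α := by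
        rw [Finset.mul_sum]
        exact Finset.sum_congr rfl fun α hα => by rw [(Finset.mem_filter.1 hα).2, mul_assoc]
    _ ≤ _ := by gcongr; exact hcentral

/-- Key combinatorial step and the resulting bound:
`Σ_{π₃(α)=0}|ĝ(α)|²(1/2)^{#α} ≤ (3/4)|ĝ(0)|² + (1/4)Even(g)` and
`−Re E[f(x)g(y)g(z)] ≤ |f̂(0)|·((3/4)|ĝ(0)|² + (1/4)Even(g)) + Dec(f,g)`. -/
theorem stmt15 (K d : ℕ) (hK : 0 < K) (hd : 1 ≤ d)
    (f : (Fin K → ZMod 3) → ℂ) (g : (Fin K × Fin d → ZMod 3) → ℂ)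
    (hfU : ∀ x, f x ∈ ({1, ω, ω^2} : Set ℂ)) (hgU : ∀ y, g y ∈ ({1, ω, ω^2} : Set ℂ)) :
    (∑ α ∈ univ.filter (fun α : Fin K × Fin d → ZMod 3 => pi3 α = 0),
        ‖fhat g α‖^2 * (1/2 : ℝ) ^ nsupp α
      ≤ (3/4) * ‖fhat g 0‖^2 + (1/4) * evenPart g) ∧
    -(∑ x : Fin K → ZMod 3, ∑ y : Fin K × Fin d → ZMod 3, ∑ z : Fin K × Fin d → ZMod 3,
        (wt x y z : ℂ) * f x * g y * g z).re
      ≤ ‖fhat f 0‖ * ((3/4) * ‖fhat g 0‖^2 + (1/4) * evenPart g)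
        + ∑ α ∈ univ.filter (fun α : Fin K × Fin d → ZMod 3 => pi3 α ≠ 0),
            ‖fhat f (pi3 α)‖ * ‖fhat g α‖^2 * (1/2 : ℝ) ^ nsupp α :=
  stmt15_general K d f g
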